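/- arXiv:math/0402298 — 3 statements merged into one kernel-verified Lean document; each statement's English description precedes it below -/
import Mathlib

section
/- Let (T,P) be nondegenerate ADHM data of charge k satisfying the ADHM condition. If ξ is a real skew-symmetric k×k matrix and α is a purely imaginary quaternion such that ξT − Tξ = 0 and (ξP)_i = P_i·α for every index i, then ξ = 0 and α = 0. (Hence the stabiliser of (T,P) in O(k)×Sp(1) is a discrete, hence finite, subgroup.) -/
open scoped Quaternion
open Matrix

noncomputable section

/-- The charge-`k` ADHM map `R_x : ℍ^k × ℍ → ℍ^k`. -/
def adhmR (k : ℕ) (T : Matrix (Fin k) (Fin k) ℍ[ℝ]) (P : Fin k → ℍ[ℝ]) (x : ℍ[ℝ]) :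
    (Fin k → ℍ[ℝ]) × ℍ[ℝ] → Fin k → ℍ[ℝ] :=
  fun vq => (T - x • (1 : Matrix (Fin k) (Fin k) ℍ[ℝ]))ᴴ *ᵥ vq.1 + fun i => P i * vq.2

/-- `(T, P)` is nondegenerate ADHM data if `R_x` is surjective for all `x ∈ ℍ`. -/
def ADHMNondegenerate (k : ℕ) (T : Matrix (Fin k) (Fin k) ℍ[ℝ]) (P : Fin k → ℍ[ℝ]) : Prop :=
  ∀ x : ℍ[ℝ], Function.Surjective (adhmR k T P x)

/-- The ADHM condition: the quaternionic matrix `TᴴT + P·Pᴴ` has entrywise vanishing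
imaginary part. -/
def ADHMCondition (k : ℕ) (T : Matrix (Fin k) (Fin k) ℍ[ℝ]) (P : Fin k → ℍ[ℝ]) : Prop :=
  ∀ i j : Fin k, ((Tᴴ * T + Matrix.of fun i j => P i * star (P j)) i j).im = 0

/-- A real matrix regarded as a quaternionic matrix via `ℝ ⊂ ℍ`. -/
def qMat {k : ℕ} (u : Matrix (Fin k) (Fin k) ℝ) : Matrix (Fin k) (Fin k) ℍ[ℝ] :=
  u.map (fun a => (a : ℍ[ℝ]))

namespace ADHMProof

def mkQ (a b c d : ℝ) : ℍ[ℝ] := ⟨a, b, c, d⟩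
@[simp] lemma mkQ_re (a b c d : ℝ) : (mkQ a b c d).re = a := rfl
@[simp] lemma mkQ_imI (a b c d : ℝ) : (mkQ a b c d).imI = b := rfl
@[simp] lemma mkQ_imJ (a b c d : ℝ) : (mkQ a b c d).imJ = c := rfl
@[simp] lemma mkQ_imK (a b c d : ℝ) : (mkQ a b c d).imK = d := rfl


def Zq (t : ℍ[ℝ]) : ℂ := ⟨t.re, t.imI⟩
def Wq (t : ℍ[ℝ]) : ℂ := ⟨t.imJ, -t.imK⟩

lemma Zq_add (s t : ℍ[ℝ]) : Zq (s + t) = Zq s + Zq t := by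
  apply Complex.ext <;> simp [Zq]
lemma Wq_add (s t : ℍ[ℝ]) : Wq (s + t) = Wq s + Wq t := by
  apply Complex.ext <;> simp [Wq] <;> ring
@[simp] lemma Zq_zero : Zq 0 = 0 := by apply Complex.ext <;> simp [Zq]
@[simp] lemma Wq_zero : Wq 0 = 0 := by apply Complex.ext <;> simp [Wq]
lemma Zq_smul (r : ℝ) (t : ℍ[ℝ]) : Zq (r • t) = (r : ℂ) * Zq t := by
  apply Complex.ext <;> simp [Zq]
lemma Wq_smul (r : ℝ) (t : ℍ[ℝ]) : Wq (r • t) = (r : ℂ) * Wq t := by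
  apply Complex.ext <;> simp [Wq]
lemma Zq_mul (s t : ℍ[ℝ]) :
    Zq (s * t) = Zq s * Zq t - (starRingEnd ℂ) (Wq s) * Wq t := by
  apply Complex.ext <;>
    simp [Zq, Wq, Quaternion.re_mul, Quaternion.imI_mul, Complex.mul_re, Complex.mul_im] <;> ring
lemma Wq_mul (s t : ℍ[ℝ]) :
    Wq (s * t) = (starRingEnd ℂ) (Zq s) * Wq t + Wq s * Zq t := by
  apply Complex.ext <;>
    simp [Zq, Wq, Quaternion.imJ_mul, Quaternion.imK_mul, Complex.mul_re, Complex.mul_im] <;> ring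
lemma Zq_star (t : ℍ[ℝ]) : Zq (star t) = (starRingEnd ℂ) (Zq t) := by
  apply Complex.ext <;> simp [Zq]
lemma Wq_star (t : ℍ[ℝ]) : Wq (star t) = - Wq t := by
  apply Complex.ext <;> simp [Wq]
lemma quat_eq_of_ZW {s t : ℍ[ℝ]} (h1 : Zq s = Zq t) (h2 : Wq s = Wq t) : s = t := by
  have e1 := congrArg Complex.re h1
  have e2 := congrArg Complex.im h1
  have e3 := congrArg Complex.re h2
  have e4 := congrArg Complex.im h2
  simp [Zq, Wq] at e1 e2 e3 e4
  exact Quaternion.ext _ _ e1 e2 e3 (by linarith)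

def ZqA : ℍ[ℝ] →+ ℂ := { toFun := Zq, map_zero' := Zq_zero, map_add' := Zq_add }
def WqA : ℍ[ℝ] →+ ℂ := { toFun := Wq, map_zero' := Wq_zero, map_add' := Wq_add }

lemma Zq_sum {n : ℕ} (f : Fin n → ℍ[ℝ]) : Zq (∑ i, f i) = ∑ i, Zq (f i) := map_sum ZqA f Finset.univ
lemma Wq_sum {n : ℕ} (f : Fin n → ℍ[ℝ]) : Wq (∑ i, f i) = ∑ i, Wq (f i) := map_sum WqA f Finset.univ

lemma Zq_coe (r : ℝ) : Zq (r : ℍ[ℝ]) = (r : ℂ) := by apply Complex.ext <;> simp [Zq]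
lemma Wq_coe (r : ℝ) : Wq (r : ℍ[ℝ]) = 0 := by apply Complex.ext <;> simp [Wq]

lemma im_zero_iff (t : ℍ[ℝ]) : t.im = 0 ↔ t.imI = 0 ∧ t.imJ = 0 ∧ t.imK = 0 := by
  constructor
  · intro h
    refine ⟨?_, ?_, ?_⟩ <;> [skip; skip; skip] <;>
      first
      | (have := congrArg QuaternionAlgebra.imI h; simpa using this)
      | (have := congrArg QuaternionAlgebra.imJ h; simpa using this)
      | (have := congrArg QuaternionAlgebra.imK h; simpa using this)
  · rintro ⟨h1, h2, h3⟩
    apply Quaternion.ext <;> simp [QuaternionAlgebra.im, h1, h2, h3]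

lemma Wq_eq_zero_of_im_zero {t : ℍ[ℝ]} (h : t.im = 0) : Wq t = 0 := by
  rw [im_zero_iff] at h
  apply Complex.ext <;> simp [Wq, h.2.1, h.2.2]



variable {V : Type} [AddCommGroup V] [Module ℂ V] [FiniteDimensional ℂ V]

def wev (X Y : Module.End ℂ V) (L : List Bool) : Module.End ℂ V :=
  (L.map (fun b => if b then X else Y)).prod

lemma wev_append (X Y : Module.End ℂ V) (L₁ L₂ : List Bool) :
    wev X Y (L₁ ++ L₂) = wev X Y L₁ * wev X Y L₂ := by
  simp [wev, List.prod_append]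

lemma wev_cons (X Y : Module.End ℂ V) (b : Bool) (L : List Bool) :
    wev X Y (b :: L) = (if b then X else Y) * wev X Y L := by
  simp [wev]

lemma wev_replicate (X Y : Module.End ℂ V) (b : Bool) (m : ℕ) :
    wev X Y (List.replicate m b) = (if b then X else Y) ^ m := by
  simp [wev, List.prod_replicate]

lemma trace_smulRight (f : V →ₗ[ℂ] ℂ) (a : V) :
    LinearMap.trace ℂ V (f.smulRight a) = f a := by
  have h1 : f.smulRight a = (LinearMap.toSpanSingleton ℂ V a) ∘ₗ f := by
    ext v; simp [LinearMap.toSpanSingleton_apply]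
  rw [h1, LinearMap.trace_comp_comm']
  have h2 : (f ∘ₗ LinearMap.toSpanSingleton ℂ V a) = (f a) • (LinearMap.id : ℂ →ₗ[ℂ] ℂ) := by
    ext c; simp [LinearMap.toSpanSingleton_apply, mul_comm]
  rw [h2, _root_.map_smul, LinearMap.trace_id]
  simp

lemma mul_C_eq (X Y : Module.End ℂ V) (f : V →ₗ[ℂ] ℂ) (a : V)
    (hC : X * Y - Y * X = f.smulRight a) (N : Module.End ℂ V) :
    N * (X * Y - Y * X) = f.smulRight (N a) := by
  rw [hC]; ext v; simp

lemma count_length (M : List Bool) : M.count true + M.count false = M.length := by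
  induction M with
  | nil => simp
  | cons b l ih => cases b <;> simp [List.count_cons] <;> omega

lemma bool_sort (L : List Bool) :
    L.Perm (List.replicate (L.count true) true ++ List.replicate (L.count false) false) := by
  induction L with
  | nil => simp
  | cons b l ih =>
    cases b with
    | true =>
      have ht : (true :: l).count true = l.count true + 1 := by simp [List.count_cons]
      have hf : (true :: l).count false = l.count false := by simp [List.count_cons]
      rw [ht, hf, List.replicate_succ]
      simpa using ih.cons true
    | false =>
      have ht : (false :: l).count true = l.count true := by simp [List.count_cons]
      have hf : (false :: l).count false = l.count false + 1 := by simp [List.count_cons]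
      rw [ht, hf]
      refine (ih.cons false).trans ?_
      refine (List.perm_middle (a := false)
        (l₁ := List.replicate (l.count true) true)
        (l₂ := List.replicate (l.count false) false)).symm.trans ?_
      rw [List.replicate_succ]

lemma trace_word_vanish (X Y : Module.End ℂ V) (f : V →ₗ[ℂ] ℂ) (a : V)
    (hC : X * Y - Y * X = f.smulRight a) :
    ∀ L : List Bool, f (wev X Y L a) = 0 := by
  set C := X * Y - Y * X with hCdef
  set τ : List Bool → ℂ := fun L => LinearMap.trace ℂ V (wev X Y L * C) with hτ
  have tau_eq : ∀ L, τ L = f (wev X Y L a) := by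
    intro L
    rw [hτ]
    simp only
    rw [hCdef, mul_C_eq X Y f a hC, trace_smulRight]
  suffices H : ∀ n (L : List Bool), L.length = n → τ L = 0 by
    intro L
    rw [← tau_eq]
    exact H L.length L rfl
  intro n
  induction n using Nat.strong_induction_on with
  | _ n ih =>
    intro L hL
    have swap : ∀ U W : List Bool, U.length + W.length + 2 = n →
        τ (U ++ true :: false :: W) = τ (U ++ false :: true :: W) := by
      intro U W hlen
      have hU : f (wev X Y U a) = 0 := by
        rw [← tau_eq]; exact ih U.length (by omega) U rfl
      have e1 : wev X Y (U ++ true :: false :: W) * C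
          = wev X Y U * (X * Y) * (wev X Y W * C) := by
        rw [wev_append, wev_cons, wev_cons]
        simp only [if_true, if_false, Bool.false_eq_true]
        noncomm_ring
      have e2 : wev X Y (U ++ false :: true :: W) * C
          = wev X Y U * (Y * X) * (wev X Y W * C) := by
        rw [wev_append, wev_cons, wev_cons]
        simp only [if_true, if_false, Bool.false_eq_true]
        noncomm_ring
      have hsub : τ (U ++ true :: false :: W) - τ (U ++ false :: true :: W)
          = LinearMap.trace ℂ V ((wev X Y U * C) * (wev X Y W * C)) := by
        rw [hτ]
        simp only
        rw [e1, e2, ← map_sub]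
        congr 1
        rw [hCdef]
        noncomm_ring
      have e3 : (wev X Y U * C) * (wev X Y W * C)
          = f (wev X Y W a) • (f.smulRight (wev X Y U a)) := by
        rw [hCdef, mul_C_eq X Y f a hC, mul_C_eq X Y f a hC]
        ext v
        simp [smul_smul, mul_comm]
      have hz : τ (U ++ true :: false :: W) - τ (U ++ false :: true :: W) = 0 := by
        rw [hsub, e3, _root_.map_smul, trace_smulRight, hU]
        simp
      exact sub_eq_zero.mp hz
    have permi : ∀ (L₁ L₂ : List Bool), L₁.Perm L₂ → ∀ (Wl : List Bool),
        Wl.length + L₁.length = n → τ (Wl ++ L₁) = τ (Wl ++ L₂) := by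
      intro L₁ L₂ hp
      induction hp with
      | nil => intro Wl h; rfl
      | cons x hpl ihp =>
        intro Wl h
        have := ihp (Wl ++ [x]) (by simp at h ⊢; omega)
        simpa [List.append_assoc] using this
      | swap x y l =>
        intro Wl h
        match x, y with
        | true, true => rfl
        | false, false => rfl
        | true, false =>
          exact (swap Wl l (by simp at h ⊢; omega)).symm
        | false, true =>
          exact swap Wl l (by simp at h ⊢; omega)
      | trans h1 h2 ih1 ih2 =>
        intro Wl h
        have hl12 := h1.length_eq
        rw [ih1 Wl h, ih2 Wl (by omega)]
    set ac := L.count true with hac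
    set bc := L.count false with hbc
    have hacbc : ac + bc = n := by rw [hac, hbc, count_length L, hL]
    have permKey : ∀ M : List Bool, M.count true = ac → M.count false = bc →
        τ M = τ (List.replicate ac true ++ List.replicate bc false) := by
      intro M h1 h2
      have hperm : M.Perm (List.replicate ac true ++ List.replicate bc false) := by
        have := bool_sort M
        rw [h1, h2] at this
        exact this
      have hlen : M.length = n := by
        rw [← count_length M, h1, h2, hacbc]
      have := permi M (List.replicate ac true ++ List.replicate bc false) hperm [] (by simpa using hlen)
      simpa using this
    set t0 := τ (List.replicate ac true ++ List.replicate bc false) with ht0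
    have hwevA : wev X Y (List.replicate ac true) = X ^ ac := by rw [wev_replicate]; simp
    have hwevB : wev X Y (List.replicate bc false) = Y ^ bc := by rw [wev_replicate]; simp
    -- telescoping
    have tele : ∀ j, j ≤ bc →
        LinearMap.trace ℂ V (X ^ ac * Y ^ j * X * Y ^ (bc + 1 - j))
          = LinearMap.trace ℂ V (X ^ (ac + 1) * Y ^ (bc + 1)) - (j : ℂ) * t0 := by
      intro j hj
      induction j with
      | zero =>
        have e0 : X ^ ac * Y ^ 0 * X * Y ^ (bc + 1 - 0) = X ^ (ac+1) * Y ^ (bc+1) := by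
          rw [pow_zero, pow_succ X ac]
          noncomm_ring
        rw [e0]
        simp
      | succ j ihj =>
        have hj' : j ≤ bc := by omega
        have hstep : LinearMap.trace ℂ V (X ^ ac * Y ^ (j+1) * X * Y ^ (bc + 1 - (j+1)))
            - LinearMap.trace ℂ V (X ^ ac * Y ^ j * X * Y ^ (bc + 1 - j)) = - t0 := by
          have hbj : bc + 1 - j = (bc - j) + 1 := by omega
          have hbj2 : bc + 1 - (j+1) = bc - j := by omega
          rw [hbj, hbj2, ← map_sub]
          have e5 : X ^ ac * Y ^ (j+1) * X * Y ^ (bc - j)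
              - X ^ ac * Y ^ j * X * Y ^ ((bc - j) + 1)
              = -((X ^ ac * Y ^ j * C) * Y ^ (bc - j)) := by
            rw [hCdef, pow_succ (Y) j, pow_succ' (Y) (bc - j)]
            noncomm_ring
          rw [e5, map_neg, neg_eq_iff_eq_neg, neg_neg]
          rw [LinearMap.trace_mul_comm]
          have e6 : Y ^ (bc - j) * (X ^ ac * Y ^ j * C)
              = wev X Y (List.replicate (bc - j) false ++ List.replicate ac true ++ List.replicate j false) * C := by
            rw [wev_append, wev_append, wev_replicate, wev_replicate, wev_replicate]
            simp only [if_true, if_false, Bool.false_eq_true]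
            noncomm_ring
          rw [e6]
          have : τ (List.replicate (bc - j) false ++ List.replicate ac true ++ List.replicate j false) = t0 := by
            apply permKey
            · simp [List.count_append, List.count_replicate]
              try omega
            · simp [List.count_append, List.count_replicate]
              try omega
          rw [hτ] at this
          simp only at this
          rw [this]
        have := ihj hj'
        rw [sub_eq_iff_eq_add] at hstep
        rw [hstep, this]
        push_cast
        ring
    have expand : t0 = LinearMap.trace ℂ V (X ^ ac * Y ^ bc * X * Y ^ 1)
        - LinearMap.trace ℂ V (X ^ (ac+1) * Y ^ (bc+1)) := by
      rw [ht0, hτ]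
      simp only
      rw [wev_append, hwevA, hwevB, hCdef]
      have e7 : X ^ ac * Y ^ bc * (X * Y - Y * X)
          = X ^ ac * Y ^ bc * X * Y ^ 1 - X ^ ac * Y ^ (bc+1) * X := by
        rw [pow_succ Y bc, pow_one]
        noncomm_ring
      rw [e7, map_sub]
      have e8 : LinearMap.trace ℂ V (X ^ ac * Y ^ (bc+1) * X)
          = LinearMap.trace ℂ V (X ^ (ac+1) * Y ^ (bc+1)) := by
        rw [LinearMap.trace_mul_comm]
        congr 1
        rw [pow_succ' X ac]
        noncomm_ring
      rw [e8]
    have hSbc := tele bc (le_refl bc)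
    have hbc1 : bc + 1 - bc = 1 := by omega
    rw [hbc1] at hSbc
    rw [hSbc] at expand
    -- t0 = (tr - bc t0) - tr
    have ht0eq : t0 = -(bc : ℂ) * t0 := by linear_combination expand
    have ht00 : t0 = 0 := by
      have : ((bc : ℂ) + 1) * t0 = 0 := by rw [mul_comm] at ht0eq ⊢; linear_combination ht0eq
      rcases mul_eq_zero.mp this with h | h
      · exact absurd h (Nat.cast_add_one_ne_zero bc)
      · exact h
    rw [permKey L rfl rfl]
    exact ht00

lemma exists_common_eigenvector [Nontrivial V] (X Y : Module.End ℂ V)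
    (h : X * Y = Y * X) :
    ∃ (w : V) (x y : ℂ), w ≠ 0 ∧ X w = x • w ∧ Y w = y • w := by
  obtain ⟨x, hx⟩ := Module.End.exists_eigenvalue X
  have hE : X.eigenspace x ≠ ⊥ := hx
  have hYE : ∀ v ∈ X.eigenspace x, Y v ∈ X.eigenspace x := by
    intro v hv
    rw [Module.End.mem_eigenspace_iff] at hv ⊢
    have hxy : X (Y v) = Y (X v) := by
      have := congrFun (congrArg DFunLike.coe h) v
      simpa using this
    rw [hxy, hv]; exact Y.map_smul x v
  have : Nontrivial (X.eigenspace x) := Submodule.nontrivial_iff_ne_bot.2 hE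
  obtain ⟨y, hy⟩ := Module.End.exists_eigenvalue (Y.restrict hYE)
  obtain ⟨w, hw⟩ := hy.exists_hasEigenvector
  refine ⟨w.1, x, y, ?_, ?_, ?_⟩
  · simpa [Submodule.coe_eq_zero] using hw.2
  · have := w.2
    rwa [Module.End.mem_eigenspace_iff] at this
  · have := hw.apply_eq_smul
    have h2 := congrArg Subtype.val this
    simpa [LinearMap.restrict_apply] using h2

lemma dichotomy [Nontrivial V] (X Y : Module.End ℂ V) (f : V →ₗ[ℂ] ℂ) (a : V)
    (hC : X * Y - Y * X = f.smulRight a) :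
    (∃ (w : V) (x y : ℂ), w ≠ 0 ∧ X w = x • w ∧ Y w = y • w ∧ f w = 0) ∨ a = 0 := by
  by_cases ha : a = 0
  · right; exact ha
  · left
    set K : Submodule ℂ V := ⨅ L : List Bool, LinearMap.ker (f ∘ₗ (wev X Y L : Module.End ℂ V)) with hK
    have hmem : ∀ w, w ∈ K ↔ ∀ L, f (wev X Y L w) = 0 := by
      intro w
      simp [hK, Submodule.mem_iInf, LinearMap.mem_ker]
    have haK : a ∈ K := (hmem a).2 (trace_word_vanish X Y f a hC)
    have hXK : ∀ w ∈ K, X w ∈ K := by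
      intro w hw
      refine (hmem _).2 (fun L => ?_)
      have h1 := (hmem w).1 hw (L ++ [true])
      rw [wev_append] at h1
      simpa [wev, Module.End.mul_apply] using h1
    have hYK : ∀ w ∈ K, Y w ∈ K := by
      intro w hw
      refine (hmem _).2 (fun L => ?_)
      have h1 := (hmem w).1 hw (L ++ [false])
      rw [wev_append] at h1
      simpa [wev, Module.End.mul_apply] using h1
    have hKnt : Nontrivial K := ⟨⟨⟨a, haK⟩, 0, by simp [ha]⟩⟩
    have hcomm' : (X.restrict hXK) * (Y.restrict hYK) = (Y.restrict hYK) * (X.restrict hXK) := by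
      ext w
      have h1 : (X * Y - Y * X) (w : V) = f (w : V) • a := by
        rw [hC]; simp
      have hfw : f (w : V) = 0 := by
        have := (hmem (w : V)).1 w.2 []
        simpa [wev] using this
      rw [hfw, zero_smul] at h1
      have h2 : X (Y (w : V)) = Y (X (w : V)) := by
        have := sub_eq_zero.mp h1
        simpa [Module.End.mul_apply] using this
      simp [Module.End.mul_apply, LinearMap.restrict_apply, h2]
    obtain ⟨w, x, y, hw0, hXw, hYw⟩ := exists_common_eigenvector (X.restrict hXK) (Y.restrict hYK) hcomm'
    refine ⟨(w : V), x, y, ?_, ?_, ?_, ?_⟩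
    · simpa [Submodule.coe_eq_zero] using hw0
    · have := congrArg Subtype.val hXw
      simpa [LinearMap.restrict_apply] using this
    · have := congrArg Subtype.val hYw
      simpa [LinearMap.restrict_apply] using this
    · have := (hmem (w : V)).1 w.2 []
      simpa [wev] using this

def reAM : ℍ[ℝ] →+ ℝ := { toFun := QuaternionAlgebra.re, map_zero' := by simp, map_add' := by simp }

lemma re_sum {n : ℕ} (f : Fin n → ℍ[ℝ]) : (∑ i, f i).re = ∑ i, (f i).re :=
  map_sum reAM f Finset.univ

lemma keyND (k : ℕ) (T : Matrix (Fin k) (Fin k) ℍ[ℝ]) (P : Fin k → ℍ[ℝ])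
    (hnd : ADHMNondegenerate k T P) (x : ℍ[ℝ]) (w : Fin k → ℍ[ℝ])
    (hw : ∀ m, ∑ l, T m l * w l = x * w m)
    (hP : ∑ m, star (w m) * P m = 0) : w = 0 := by
  by_contra hw0
  obtain ⟨⟨v, s⟩, hv⟩ := hnd x w
  -- the linear functional y ↦ ∑ (star (w m) * y m).re kills the range of adhmR but not w
  have hpos : (0:ℝ) < ∑ m, (star (w m) * w m).re := by
    have hnn : ∀ m, (0:ℝ) ≤ (star (w m) * w m).re := by
      intro m
      rw [Quaternion.star_mul_self, Quaternion.re_coe]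
      exact Quaternion.normSq_nonneg
    have hex : ∃ m, (0:ℝ) < (star (w m) * w m).re := by
      have : ∃ m, w m ≠ 0 := by
        by_contra hall
        push_neg at hall
        exact hw0 (funext hall)
      obtain ⟨m, hm⟩ := this
      refine ⟨m, ?_⟩
      rw [Quaternion.star_mul_self, Quaternion.re_coe]
      have h1 := Quaternion.normSq_nonneg (a := w m)
      have h2 : Quaternion.normSq (w m) ≠ 0 := by
        intro h
        exact hm (Quaternion.normSq_eq_zero.mp h)
      exact lt_of_le_of_ne h1 (Ne.symm h2)
    obtain ⟨m, hm⟩ := hex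
    exact Finset.sum_pos' (fun i _ => hnn i) ⟨m, Finset.mem_univ m, hm⟩
  have hzero : ∑ m, (star (w m) * w m).re = 0 := by
    have expand : ∀ m, w m = ((T - x • (1 : Matrix (Fin k) (Fin k) ℍ[ℝ]))ᴴ *ᵥ v) m + P m * s := by
      intro m
      have := congrFun hv m
      exact this.symm
    calc ∑ m, (star (w m) * w m).re
        = ∑ m, (star (w m) * (((T - x • (1 : Matrix (Fin k) (Fin k) ℍ[ℝ]))ᴴ *ᵥ v) m + P m * s)).re := by
          refine Finset.sum_congr rfl (fun m _ => ?_)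
          rw [← expand m]
      _ = (∑ m, (star (w m) * (((T - x • (1 : Matrix (Fin k) (Fin k) ℍ[ℝ]))ᴴ *ᵥ v) m)).re)
          + ∑ m, (star (w m) * (P m * s)).re := by
          rw [← Finset.sum_add_distrib]
          refine Finset.sum_congr rfl (fun m _ => ?_)
          rw [mul_add, Quaternion.re_add]
      _ = 0 + 0 := by
          congr 1
          · -- first sum vanishes using the eigen-equation
            have : ∀ m, (star (w m) * (((T - x • (1 : Matrix (Fin k) (Fin k) ℍ[ℝ]))ᴴ *ᵥ v) m))
                = ∑ l, star ((T l m - (x • (1 : Matrix (Fin k) (Fin k) ℍ[ℝ])) l m) * w m) * v l := by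
              intro m
              rw [Matrix.mulVec, dotProduct, Finset.mul_sum]
              refine Finset.sum_congr rfl (fun l _ => ?_)
              rw [Matrix.conjTranspose_apply, Matrix.sub_apply, ← mul_assoc, ← StarMul.star_mul]
            calc ∑ m, (star (w m) * (((T - x • (1 : Matrix (Fin k) (Fin k) ℍ[ℝ]))ᴴ *ᵥ v) m)).re
                = ∑ m, ∑ l, (star ((T l m - (x • (1 : Matrix (Fin k) (Fin k) ℍ[ℝ])) l m) * w m) * v l).re := by
                  refine Finset.sum_congr rfl (fun m _ => ?_)
                  rw [this m, re_sum]
              _ = ∑ l, (star (∑ m, (T l m - (x • (1 : Matrix (Fin k) (Fin k) ℍ[ℝ])) l m) * w m) * v l).re := by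
                  rw [Finset.sum_comm]
                  refine Finset.sum_congr rfl (fun l _ => ?_)
                  rw [star_sum, Finset.sum_mul, re_sum]
              _ = 0 := by
                  refine Finset.sum_eq_zero (fun l _ => ?_)
                  have hzero2 : ∑ m, (T l m - (x • (1 : Matrix (Fin k) (Fin k) ℍ[ℝ])) l m) * w m = 0 := by
                    have e1 : ∑ m, (T l m - (x • (1 : Matrix (Fin k) (Fin k) ℍ[ℝ])) l m) * w m
                        = (∑ m, T l m * w m) - ∑ m, (x • (1 : Matrix (Fin k) (Fin k) ℍ[ℝ])) l m * w m := by
                      rw [← Finset.sum_sub_distrib]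
                      exact Finset.sum_congr rfl (fun m _ => sub_mul _ _ _)
                    have e2 : ∑ m, (x • (1 : Matrix (Fin k) (Fin k) ℍ[ℝ])) l m * w m = x * w l := by
                      rw [Finset.sum_eq_single l]
                      · simp [Matrix.smul_apply, Matrix.one_apply]
                      · intro b _ hb
                        simp [Matrix.smul_apply, Matrix.one_apply, Ne.symm hb]
                      · intro h
                        exact absurd (Finset.mem_univ l) h
                    rw [e1, e2, hw l, sub_self]
                  rw [hzero2]
                  simp
          · -- second sum vanishes using hP
            calc ∑ m, (star (w m) * (P m * s)).re
                = ((∑ m, star (w m) * P m) * s).re := by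
                  rw [Finset.sum_mul, re_sum]
                  refine Finset.sum_congr rfl (fun m _ => ?_)
                  rw [mul_assoc]
              _ = 0 := by rw [hP]; simp
      _ = 0 := by simp
  linarith


def pairing {k : ℕ} (c : Fin k → ℂ) : (Fin k → ℂ) →ₗ[ℂ] ℂ where
  toFun := fun w => ∑ n, w n * c n
  map_add' := by
    intro a b
    simp [add_mul, Finset.sum_add_distrib]
  map_smul' := by
    intro r a
    simp [Finset.mul_sum, mul_assoc]

@[simp] lemma pairing_apply {k : ℕ} (c w : Fin k → ℂ) : pairing c w = ∑ n, w n * c n := rfl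

set_option maxHeartbeats 2000000 in
lemma main_aux (k : ℕ) (hk : 1 ≤ k)
    (T : Matrix (Fin k) (Fin k) ℍ[ℝ]) (hT : T.IsSymm) (P : Fin k → ℍ[ℝ])
    (hadhm : ADHMCondition k T P) (hnd : ADHMNondegenerate k T P)
    (ξ : Matrix (Fin k) (Fin k) ℝ) (hξ : ξᵀ = -ξ)
    (θ : ℝ)
    (hcomm : qMat ξ * T - T * qMat ξ = 0)
    (hvec : ∀ i : Fin k, (qMat ξ *ᵥ P) i = P i * mkQ 0 θ 0 0) :
    ξ = 0 ∧ θ = 0 := by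
  classical
  haveI : Nonempty (Fin k) := ⟨⟨0, hk⟩⟩
  set lam : ℂ := (θ : ℂ) * Complex.I with hlam
  set T1 : Matrix (Fin k) (Fin k) ℂ := Matrix.of (fun m n => Zq (T m n)) with hT1
  set T2 : Matrix (Fin k) (Fin k) ℂ := Matrix.of (fun m n => Wq (T m n)) with hT2
  set p : Fin k → ℂ := fun n => Zq (P n) with hpdef
  set q : Fin k → ℂ := fun n => Wq (P n) with hqdef
  set pbar : Fin k → ℂ := fun n => (starRingEnd ℂ) (Zq (P n)) with hpbardef
  set xiC : Matrix (Fin k) (Fin k) ℂ := Matrix.of (fun m n => ((ξ m n : ℝ) : ℂ)) with hxiC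
  have hTs : ∀ m n, T m n = T n m := by
    intro m n
    have := congrFun (congrFun hT n) m
    simpa [Matrix.transpose_apply] using this
  have hskewC : ∀ m n, xiC m n = - xiC n m := by
    intro m n
    have := congrFun (congrFun hξ n) m
    simp only [Matrix.transpose_apply, Matrix.neg_apply] at this
    simp only [hxiC, Matrix.of_apply]
    rw [this]
    push_cast
    ring
  -- translated commutation
  have hqT : ∀ m n, (qMat ξ * T) m n = (T * qMat ξ) m n := by
    intro m n
    have h0 : qMat ξ * T = T * qMat ξ := sub_eq_zero.mp hcomm
    rw [h0]
  have hMC1 : xiC * T1 = T1 * xiC := by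
    ext m n
    have h0 := hqT m n
    rw [Matrix.mul_apply, Matrix.mul_apply] at h0
    have hz := congrArg Zq h0
    rw [Zq_sum, Zq_sum] at hz
    rw [Matrix.mul_apply, Matrix.mul_apply]
    calc ∑ l, xiC m l * T1 l n
        = ∑ l, Zq (qMat ξ m l * T l n) := by
          refine Finset.sum_congr rfl (fun l _ => ?_)
          rw [Zq_mul]
          simp [qMat, Zq_coe, Wq_coe, hxiC, hT1]
      _ = ∑ l, Zq (T m l * qMat ξ l n) := hz
      _ = ∑ l, T1 m l * xiC l n := by
          refine Finset.sum_congr rfl (fun l _ => ?_)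
          rw [Zq_mul]
          simp [qMat, Zq_coe, Wq_coe, hxiC, hT1]
  have hMC2 : xiC * T2 = T2 * xiC := by
    ext m n
    have h0 := hqT m n
    rw [Matrix.mul_apply, Matrix.mul_apply] at h0
    have hz := congrArg Wq h0
    rw [Wq_sum, Wq_sum] at hz
    rw [Matrix.mul_apply, Matrix.mul_apply]
    calc ∑ l, xiC m l * T2 l n
        = ∑ l, Wq (qMat ξ m l * T l n) := by
          refine Finset.sum_congr rfl (fun l _ => ?_)
          rw [Wq_mul]
          simp [qMat, Zq_coe, Wq_coe, hxiC, hT2, Complex.conj_ofReal]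
      _ = ∑ l, Wq (T m l * qMat ξ l n) := hz
      _ = ∑ l, T2 m l * xiC l n := by
          refine Finset.sum_congr rfl (fun l _ => ?_)
          rw [Wq_mul]
          simp [qMat, Zq_coe, Wq_coe, hxiC, hT2]
  -- translated ADHM condition : commutator identity
  have hMF2 : ∀ m n, (T1 * T2 - T2 * T1) m n = pbar m * q n - q m * pbar n := by
    intro m n
    have h0 := hadhm m n
    have hW := Wq_eq_zero_of_im_zero h0
    have hent : ((Tᴴ * T + Matrix.of fun i j => P i * star (P j)) m n)
        = (∑ l, star (T l m) * T l n) + P m * star (P n) := by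
      simp only [Matrix.add_apply, Matrix.of_apply, Matrix.mul_apply, Matrix.conjTranspose_apply]
    rw [hent, Wq_add, Wq_sum] at hW
    have hsum : ∑ l, Wq (star (T l m) * T l n) = (T1 * T2 - T2 * T1) m n := by
      rw [Matrix.sub_apply, Matrix.mul_apply, Matrix.mul_apply, ← Finset.sum_sub_distrib]
      refine Finset.sum_congr rfl (fun l _ => ?_)
      have e1 : (T1 : Matrix (Fin k) (Fin k) ℂ) m l = Zq (T l m) := by
        rw [hT1]; simp only [Matrix.of_apply]; rw [hTs m l]
      have e2 : (T2 : Matrix (Fin k) (Fin k) ℂ) m l = Wq (T l m) := by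
        rw [hT2]; simp only [Matrix.of_apply]; rw [hTs m l]
      have e3 : (T1 : Matrix (Fin k) (Fin k) ℂ) l n = Zq (T l n) := by
        rw [hT1]; simp only [Matrix.of_apply]
      have e4 : (T2 : Matrix (Fin k) (Fin k) ℂ) l n = Wq (T l n) := by
        rw [hT2]; simp only [Matrix.of_apply]
      rw [Wq_mul, Zq_star, Wq_star, e1, e2, e3, e4]
      simp only [Complex.conj_conj]
      ring
    have hPP : Wq (P m * star (P n)) = - (pbar m * q n - q m * pbar n) := by
      rw [Wq_mul, Zq_star, Wq_star]
      simp only [hpbardef, hqdef]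
      ring
    rw [hsum, hPP] at hW
    linear_combination hW
  -- translated vector conditions
  have hVP : xiC *ᵥ p = lam • p := by
    funext n
    have h0 := hvec n
    rw [Matrix.mulVec, dotProduct] at h0
    have hz := congrArg Zq h0
    rw [Zq_sum] at hz
    have hZa : Zq (mkQ 0 θ 0 0) = lam := by
      simp only [hlam, Zq]
      apply Complex.ext <;> simp
    have hWa : Wq (mkQ 0 θ 0 0) = 0 := by
      apply Complex.ext <;> simp [Wq]
    rw [Zq_mul, hZa, hWa, mul_zero, sub_zero] at hz
    rw [Matrix.mulVec, dotProduct]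
    calc ∑ l, xiC n l * p l
        = ∑ l, Zq (qMat ξ n l * P l) := by
          refine Finset.sum_congr rfl (fun l _ => ?_)
          rw [Zq_mul]
          simp [qMat, Zq_coe, Wq_coe, hxiC, hpdef]
      _ = Zq (P n) * lam := hz
      _ = (lam • p) n := by
          simp only [Pi.smul_apply, smul_eq_mul, hpdef]
          ring
  have hVQ : xiC *ᵥ q = lam • q := by
    funext n
    have h0 := hvec n
    rw [Matrix.mulVec, dotProduct] at h0
    have hz := congrArg Wq h0
    rw [Wq_sum] at hz
    have hZa : Zq (mkQ 0 θ 0 0) = lam := by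
      simp only [hlam, Zq]
      apply Complex.ext <;> simp
    have hWa : Wq (mkQ 0 θ 0 0) = 0 := by
      apply Complex.ext <;> simp [Wq]
    rw [Wq_mul, hZa, hWa, mul_zero, zero_add] at hz
    rw [Matrix.mulVec, dotProduct]
    calc ∑ l, xiC n l * q l
        = ∑ l, Wq (qMat ξ n l * P l) := by
          refine Finset.sum_congr rfl (fun l _ => ?_)
          rw [Wq_mul]
          simp [qMat, Zq_coe, Wq_coe, hxiC, hqdef, Complex.conj_ofReal]
      _ = Wq (P n) * lam := hz
      _ = (lam • q) n := by
          simp only [Pi.smul_apply, smul_eq_mul, hqdef]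
          ring
  -- eigenspaces
  set eg : ℂ → Submodule ℂ (Fin k → ℂ) :=
    fun μ => LinearMap.ker (Matrix.mulVecLin xiC - μ • LinearMap.id) with heg
  have mem_eg : ∀ (μ : ℂ) (w : Fin k → ℂ), w ∈ eg μ ↔ xiC *ᵥ w = μ • w := by
    intro μ w
    simp only [heg, LinearMap.mem_ker, LinearMap.sub_apply, LinearMap.smul_apply,
      LinearMap.id_apply, Matrix.mulVecLin_apply, sub_eq_zero]
  -- isotropy
  have isotropy : ∀ (μ ν : ℂ), μ + ν ≠ 0 → ∀ w1 w2, w1 ∈ eg μ → w2 ∈ eg ν →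
      ∑ n, w1 n * w2 n = 0 := by
    intro μ ν hμν w1 w2 h1 h2
    rw [mem_eg] at h1 h2
    have hA : ∑ n, (xiC *ᵥ w1) n * w2 n = ∑ n, ∑ l, xiC n l * w1 l * w2 n := by
      refine Finset.sum_congr rfl (fun n _ => ?_)
      rw [Matrix.mulVec, dotProduct, Finset.sum_mul]
    have hB : ∑ n, w1 n * (xiC *ᵥ w2) n = ∑ n, ∑ l, xiC n l * w1 n * w2 l := by
      refine Finset.sum_congr rfl (fun n _ => ?_)
      rw [Matrix.mulVec, dotProduct, Finset.mul_sum]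
      exact Finset.sum_congr rfl (fun l _ => by ring)
    have hB2 : ∑ n, ∑ l, xiC n l * w1 n * w2 l = - ∑ n, ∑ l, xiC n l * w1 l * w2 n := by
      rw [Finset.sum_comm, ← Finset.sum_neg_distrib]
      refine Finset.sum_congr rfl (fun n _ => ?_)
      rw [← Finset.sum_neg_distrib]
      refine Finset.sum_congr rfl (fun l _ => ?_)
      rw [hskewC l n]
      ring
    have hμA : ∑ n, (xiC *ᵥ w1) n * w2 n = μ * ∑ n, w1 n * w2 n := by
      rw [h1, Finset.mul_sum]
      refine Finset.sum_congr rfl (fun n _ => ?_)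
      simp only [Pi.smul_apply, smul_eq_mul]
      ring
    have hνB : ∑ n, w1 n * (xiC *ᵥ w2) n = ν * ∑ n, w1 n * w2 n := by
      rw [h2, Finset.mul_sum]
      refine Finset.sum_congr rfl (fun n _ => ?_)
      simp only [Pi.smul_apply, smul_eq_mul]
      ring
    have htot : (μ + ν) * ∑ n, w1 n * w2 n = 0 := by
      have h5 : μ * (∑ n, w1 n * w2 n) + ν * (∑ n, w1 n * w2 n) = 0 := by
        rw [← hμA, ← hνB, hA, hB, hB2]
        ring
      linear_combination h5
    rcases mul_eq_zero.mp htot with h | h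
    · exact absurd h hμν
    · exact h
  -- conjugation
  have hconjmem : ∀ (μ : ℂ) (w : Fin k → ℂ), w ∈ eg μ →
      (fun n => (starRingEnd ℂ) (w n)) ∈ eg ((starRingEnd ℂ) μ) := by
    intro μ w hw
    rw [mem_eg] at hw ⊢
    funext n
    have h0 := congrFun hw n
    simp only [Pi.smul_apply, smul_eq_mul] at h0
    rw [Matrix.mulVec, dotProduct] at h0 ⊢
    have := congrArg (starRingEnd ℂ) h0
    rw [map_sum, _root_.map_mul] at this
    simp only [Pi.smul_apply, smul_eq_mul]
    calc ∑ l, xiC n l * (starRingEnd ℂ) (w l)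
        = ∑ l, (starRingEnd ℂ) (xiC n l * w l) := by
          refine Finset.sum_congr rfl (fun l _ => ?_)
          rw [_root_.map_mul]
          simp [hxiC, Complex.conj_ofReal]
      _ = (starRingEnd ℂ) μ * (starRingEnd ℂ) (w n) := this
  -- T1 T2 preserve eigenspaces
  have hpres1 : ∀ (μ : ℂ), ∀ w ∈ eg μ, T1 *ᵥ w ∈ eg μ := by
    intro μ w hw
    rw [mem_eg] at hw ⊢
    rw [Matrix.mulVec_mulVec, hMC1, ← Matrix.mulVec_mulVec, hw, Matrix.mulVec_smul]
  have hpres2 : ∀ (μ : ℂ), ∀ w ∈ eg μ, T2 *ᵥ w ∈ eg μ := by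
    intro μ w hw
    rw [mem_eg] at hw ⊢
    rw [Matrix.mulVec_mulVec, hMC2, ← Matrix.mulVec_mulVec, hw, Matrix.mulVec_smul]
  -- the contradiction from a common complex eigenvector
  have noW : ∀ (w : Fin k → ℂ) (x1 x2 : ℂ),
      T1 *ᵥ w = x1 • w → T2 *ᵥ w = x2 • w →
      (∑ n, (starRingEnd ℂ) (w n) * p n = 0) → (∑ n, w n * q n = 0) → w = 0 := by
    intro w x1 x2 h1 h2 h3 h4
    set wQ : Fin k → ℍ[ℝ] := fun n => mkQ (w n).re (w n).im 0 0 with hwQ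
    have hZw : ∀ n, Zq (wQ n) = w n := by
      intro n
      apply Complex.ext <;> simp [Zq, hwQ]
    have hWw : ∀ n, Wq (wQ n) = 0 := by
      intro n
      apply Complex.ext <;> simp [Wq, hwQ]
    set xQ : ℍ[ℝ] := mkQ x1.re x1.im x2.re (-x2.im) with hxQ
    have hZx : Zq xQ = x1 := by apply Complex.ext <;> simp [Zq, hxQ]
    have hWx : Wq xQ = x2 := by apply Complex.ext <;> simp [Wq, hxQ]
    have heig : ∀ m, ∑ l, T m l * wQ l = xQ * wQ m := by
      intro m
      have e1 := congrFun h1 m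
      have e2 := congrFun h2 m
      rw [Matrix.mulVec, dotProduct] at e1 e2
      simp only [Pi.smul_apply, smul_eq_mul] at e1 e2
      apply quat_eq_of_ZW
      · rw [Zq_sum, Zq_mul, hZx, hZw, hWw, mul_zero, sub_zero]
        rw [← e1]
        refine Finset.sum_congr rfl (fun l _ => ?_)
        rw [Zq_mul, hZw, hWw, mul_zero, sub_zero]
        simp [hT1]
      · rw [Wq_sum, Wq_mul, hZx, hWx, hZw, hWw, mul_zero, zero_add]
        rw [← e2]
        refine Finset.sum_congr rfl (fun l _ => ?_)
        rw [Wq_mul, hZw, hWw, mul_zero, zero_add]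
        simp [hT2]
    have hstar : ∑ m, star (wQ m) * P m = 0 := by
      apply quat_eq_of_ZW
      · rw [Zq_sum, Zq_zero]
        rw [← h3]
        refine Finset.sum_congr rfl (fun m _ => ?_)
        rw [Zq_mul, Zq_star, Wq_star, hZw, hWw]
        simp [hpdef]
      · rw [Wq_sum, Wq_zero]
        rw [← h4]
        refine Finset.sum_congr rfl (fun m _ => ?_)
        rw [Wq_mul, Zq_star, Wq_star, hZw, hWw]
        simp [hqdef, Complex.conj_conj]
    have := keyND k T P hnd xQ wQ heig hstar
    funext n
    have hn := congrFun this n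
    rw [← hZw n, hn]
    simp
  -- helper: value of the commutator
  have hcommval : ∀ (w : Fin k → ℂ), (∑ n, pbar n * w n = 0) →
      T1 *ᵥ (T2 *ᵥ w) - T2 *ᵥ (T1 *ᵥ w) = (∑ n, w n * q n) • pbar := by
    intro w hzero
    funext mm
    have e0 : (T1 *ᵥ (T2 *ᵥ w) - T2 *ᵥ (T1 *ᵥ w)) mm
        = ((T1 * T2) *ᵥ w) mm - ((T2 * T1) *ᵥ w) mm := by
      rw [Pi.sub_apply, Matrix.mulVec_mulVec, Matrix.mulVec_mulVec]
    rw [e0, Matrix.mulVec, Matrix.mulVec, dotProduct, dotProduct,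
      ← Finset.sum_sub_distrib]
    have e1 : ∀ n, (T1 * T2) mm n * w n - (T2 * T1) mm n * w n
        = (pbar mm * q n - q mm * pbar n) * w n := by
      intro n
      rw [← sub_mul]
      congr 1
      have := hMF2 mm n
      rw [Matrix.sub_apply] at this
      exact this
    rw [Finset.sum_congr rfl (fun n _ => e1 n)]
    have e2 : ∑ n, (pbar mm * q n - q mm * pbar n) * w n
        = pbar mm * (∑ n, w n * q n) - q mm * (∑ n, pbar n * w n) := by
      rw [Finset.mul_sum, Finset.mul_sum, ← Finset.sum_sub_distrib]
      refine Finset.sum_congr rfl (fun n _ => by ring)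
    rw [e2, hzero, mul_zero, sub_zero, Pi.smul_apply, smul_eq_mul]
    ring
  -- p and q are not both zero (else global contradiction)
  have hPnot : ¬ (p = 0 ∧ q = 0) := by
    rintro ⟨hp0, hq0⟩
    have hpbar0 : pbar = 0 := by
      funext n
      have : p n = 0 := congrFun hp0 n
      simp only [hpbardef]
      simp only [hpdef] at this
      rw [this]
      simp
    have hcommT : (Matrix.mulVecLin T1) * (Matrix.mulVecLin T2)
        = (Matrix.mulVecLin T2) * (Matrix.mulVecLin T1) := by
      apply LinearMap.ext
      intro w
      have h1 : ∑ n, pbar n * w n = 0 := by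
        rw [hpbar0]; simp
      have := hcommval w h1
      rw [hpbar0, smul_zero] at this
      have h2 := sub_eq_zero.mp this
      simp only [Module.End.mul_apply, Matrix.mulVecLin_apply]
      exact h2
    haveI : Nontrivial (Fin k → ℂ) := by
      refine ⟨0, (fun _ => 1), ?_⟩
      intro h
      have := congrFun h ⟨0, hk⟩
      simp at this
    obtain ⟨w, x, y, hw0, hX, hY⟩ :=
      exists_common_eigenvector (Matrix.mulVecLin T1) (Matrix.mulVecLin T2) hcommT
    have h1 : T1 *ᵥ w = x • w := by simpa [Matrix.mulVecLin_apply] using hX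
    have h2 : T2 *ᵥ w = y • w := by simpa [Matrix.mulVecLin_apply] using hY
    have h3 : ∑ n, (starRingEnd ℂ) (w n) * p n = 0 := by
      rw [Finset.sum_eq_zero]
      intro n _
      rw [congrFun hp0 n]
      simp
    have h4 : ∑ n, w n * q n = 0 := by
      rw [Finset.sum_eq_zero]
      intro n _
      rw [congrFun hq0 n]
      simp
    exact hw0 (noW w x y h1 h2 h3 h4)
  have hpbar_eq : (fun n => (starRingEnd ℂ) (p n)) = pbar := by
    funext n
    simp [hpbardef, hpdef]
  have hp_eq_conj_pbar : ∀ n, p n = (starRingEnd ℂ) (pbar n) := by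
    intro n
    simp [hpbardef, hpdef]
  -- θ = 0
  have hθ0 : θ = 0 := by
    by_contra hθ
    have hlamne : lam ≠ 0 := by
      rw [hlam]
      intro h
      rcases mul_eq_zero.mp h with h | h
      · exact hθ (by exact_mod_cast h)
      · exact Complex.I_ne_zero h
    have h2lamne : -lam + -lam ≠ 0 := by
      intro h
      apply hlamne
      have : (-2 : ℂ) * lam = 0 := by linear_combination h
      rcases mul_eq_zero.mp this with h' | h'
      · norm_num at h'
      · exact h'
    have hlamlamne : lam + lam ≠ 0 := by
      intro h
      apply hlamne
      have : (2 : ℂ) * lam = 0 := by linear_combination h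
      rcases mul_eq_zero.mp this with h' | h'
      · norm_num at h'
      · exact h'
    have hpmem : p ∈ eg lam := (mem_eg _ _).2 hVP
    have hqmem : q ∈ eg lam := (mem_eg _ _).2 hVQ
    have hconjlam : (starRingEnd ℂ) lam = -lam := by
      rw [hlam]
      simp [_root_.map_mul, Complex.conj_ofReal, Complex.conj_I]
    have hpbarmem : pbar ∈ eg (-lam) := by
      have := hconjmem lam p hpmem
      rw [hconjlam] at this
      rwa [hpbar_eq] at this
    have hqbarmem : (fun n => (starRingEnd ℂ) (q n)) ∈ eg (-lam) := by
      have := hconjmem lam q hqmem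
      rwa [hconjlam] at this
    haveI hNTm : Nontrivial (eg (-lam)) := by
      rcases not_and_or.mp hPnot with hp | hq
      · refine ⟨⟨pbar, hpbarmem⟩, 0, ?_⟩
        rw [Ne, Submodule.mk_eq_zero]
        intro h0
        apply hp
        funext n
        rw [hp_eq_conj_pbar n, congrFun h0 n]
        simp
      · refine ⟨⟨(fun n => (starRingEnd ℂ) (q n)), hqbarmem⟩, 0, ?_⟩
        rw [Ne, Submodule.mk_eq_zero]
        intro h0
        apply hq
        funext n
        have := congrFun h0 n
        simp only [Pi.zero_apply, map_eq_zero] at this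
        exact this
    set X1 : Module.End ℂ (eg (-lam)) :=
      (Matrix.mulVecLin T1).restrict (fun w hw => hpres1 (-lam) w hw) with hX1def
    set X2 : Module.End ℂ (eg (-lam)) :=
      (Matrix.mulVecLin T2).restrict (fun w hw => hpres2 (-lam) w hw) with hX2def
    set fq : (eg (-lam)) →ₗ[ℂ] ℂ := (pairing q) ∘ₗ (eg (-lam)).subtype with hfqdef
    have hCres : X1 * X2 - X2 * X1 = fq.smulRight ⟨pbar, hpbarmem⟩ := by
      apply LinearMap.ext
      intro w
      apply Subtype.ext
      have hzero : ∑ n, pbar n * (w : Fin k → ℂ) n = 0 :=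
        isotropy (-lam) (-lam) h2lamne pbar (w : Fin k → ℂ) hpbarmem w.2
      have hval := hcommval (w : Fin k → ℂ) hzero
      exact hval
    rcases dichotomy X1 X2 fq ⟨pbar, hpbarmem⟩ hCres with
      ⟨w, x, y, hw0, hX, hY, hf⟩ | ha0
    · have hXa : T1 *ᵥ (w : Fin k → ℂ) = x • (w : Fin k → ℂ) := by
        exact congrArg Subtype.val hX
      have hYa : T2 *ᵥ (w : Fin k → ℂ) = y • (w : Fin k → ℂ) := by
        exact congrArg Subtype.val hY
      have h4 : ∑ n, (w : Fin k → ℂ) n * q n = 0 := hf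
      have h3 : ∑ n, (starRingEnd ℂ) ((w : Fin k → ℂ) n) * p n = 0 := by
        have hiso : ∑ n, (w : Fin k → ℂ) n * pbar n = 0 :=
          isotropy (-lam) (-lam) h2lamne (w : Fin k → ℂ) pbar w.2 hpbarmem
        calc ∑ n, (starRingEnd ℂ) ((w : Fin k → ℂ) n) * p n
            = ∑ n, (starRingEnd ℂ) ((w : Fin k → ℂ) n * pbar n) := by
              refine Finset.sum_congr rfl (fun n _ => ?_)
              rw [_root_.map_mul, hp_eq_conj_pbar n]
          _ = 0 := by rw [← map_sum, hiso, map_zero]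
      have := noW (w : Fin k → ℂ) x y hXa hYa h3 h4
      exact hw0 (Subtype.ext this)
    · -- pbar = 0, hence p = 0 and q ≠ 0
      have hpbar0 : pbar = 0 := by
        have := congrArg Subtype.val ha0
        simpa using this
      have hp0 : p = 0 := by
        funext n
        rw [hp_eq_conj_pbar n, congrFun hpbar0 n]
        simp
      have hq0 : q ≠ 0 := fun h => hPnot ⟨hp0, h⟩
      haveI hNTp : Nontrivial (eg lam) := by
        refine ⟨⟨q, hqmem⟩, 0, ?_⟩
        rw [Ne, Submodule.mk_eq_zero]
        exact hq0
      set Y1 : Module.End ℂ (eg lam) :=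
        (Matrix.mulVecLin T1).restrict (fun w hw => hpres1 lam w hw) with hY1def
      set Y2 : Module.End ℂ (eg lam) :=
        (Matrix.mulVecLin T2).restrict (fun w hw => hpres2 lam w hw) with hY2def
      have hcommY : Y1 * Y2 = Y2 * Y1 := by
        apply LinearMap.ext
        intro w
        apply Subtype.ext
        have hzero : ∑ n, pbar n * (w : Fin k → ℂ) n = 0 := by
          rw [hpbar0]; simp
        have hval := hcommval (w : Fin k → ℂ) hzero
        rw [hpbar0, smul_zero] at hval
        exact sub_eq_zero.mp hval
      obtain ⟨w, x, y, hw0, hX, hY⟩ := exists_common_eigenvector Y1 Y2 hcommY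
      have hXa : T1 *ᵥ (w : Fin k → ℂ) = x • (w : Fin k → ℂ) := by
        exact congrArg Subtype.val hX
      have hYa : T2 *ᵥ (w : Fin k → ℂ) = y • (w : Fin k → ℂ) := by
        exact congrArg Subtype.val hY
      have h3 : ∑ n, (starRingEnd ℂ) ((w : Fin k → ℂ) n) * p n = 0 := by
        rw [Finset.sum_eq_zero]
        intro n _
        rw [congrFun hp0 n]
        simp
      have h4 : ∑ n, (w : Fin k → ℂ) n * q n = 0 :=
        isotropy lam lam hlamlamne (w : Fin k → ℂ) q w.2 hqmem
      have := noW (w : Fin k → ℂ) x y hXa hYa h3 h4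
      exact hw0 (Subtype.ext this)
  -- now ξ = 0
  have hlam0 : lam = 0 := by rw [hlam, hθ0]; simp
  have hxi0 : ξ = 0 := by
    by_contra hxi
    have hex : ∃ m n, ξ m n ≠ 0 := by
      by_contra hall
      push_neg at hall
      apply hxi
      ext m n
      exact hall m n
    obtain ⟨m0, n0, hmn⟩ := hex
    have kerlem : ∀ v : Fin k → ℂ, xiC *ᵥ (xiC *ᵥ v) = 0 → xiC *ᵥ v = 0 := by
      intro v hv
      set u := xiC *ᵥ v with hu
      have hs : ∑ n, (starRingEnd ℂ) (u n) * u n = 0 := by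
        have e1 : ∀ n, (starRingEnd ℂ) (u n) = ∑ l, xiC n l * (starRingEnd ℂ) (v l) := by
          intro n
          rw [hu, Matrix.mulVec, dotProduct, map_sum]
          refine Finset.sum_congr rfl (fun l _ => ?_)
          rw [_root_.map_mul]
          simp [hxiC, Complex.conj_ofReal]
        calc ∑ n, (starRingEnd ℂ) (u n) * u n
            = ∑ n, ∑ l, xiC n l * (starRingEnd ℂ) (v l) * u n := by
              refine Finset.sum_congr rfl (fun n _ => ?_)
              rw [e1 n, Finset.sum_mul]
          _ = ∑ l, (starRingEnd ℂ) (v l) * ∑ n, xiC n l * u n := by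
              rw [Finset.sum_comm]
              refine Finset.sum_congr rfl (fun l _ => ?_)
              rw [Finset.mul_sum]
              refine Finset.sum_congr rfl (fun n _ => by ring)
          _ = ∑ l, (starRingEnd ℂ) (v l) * (-(xiC *ᵥ u) l) := by
              refine Finset.sum_congr rfl (fun l _ => ?_)
              congr 1
              rw [Matrix.mulVec, dotProduct, ← Finset.sum_neg_distrib]
              refine Finset.sum_congr rfl (fun n _ => ?_)
              rw [hskewC n l]
              ring
          _ = 0 := by
              rw [hv]
              simp
      have hre : ∑ n, ‖u n‖^2 = (0:ℝ) := by
        have h6 := congrArg Complex.re hs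
        rw [Complex.re_sum] at h6
        simp only [Complex.zero_re] at h6
        rw [← h6]
        refine Finset.sum_congr rfl (fun n _ => ?_)
        rw [Complex.conj_mul', ← Complex.ofReal_pow, Complex.ofReal_re]
      funext n
      have hnn : ∀ i ∈ Finset.univ, (0:ℝ) ≤ ‖u i‖^2 := fun i _ => by positivity
      have h7 := (Finset.sum_eq_zero_iff_of_nonneg hnn).mp hre n (Finset.mem_univ n)
      have h8 : ‖u n‖ = 0 := by nlinarith [norm_nonneg (u n)]
      simpa using norm_eq_zero.mp h8
    set A := Matrix.mulVecLin xiC with hA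
    have hAne : ∃ v, A v ≠ 0 := by
      refine ⟨Pi.single n0 1, ?_⟩
      intro h
      have h1 := congrFun h m0
      rw [hA, Matrix.mulVecLin_apply] at h1
      have h2 := congrFun (Matrix.mulVec_single xiC n0 (1:ℂ)) m0
      rw [h1] at h2
      simp only [Pi.zero_apply, mul_one] at h2
      have e : xiC m0 n0 = ((ξ m0 n0 : ℝ) : ℂ) := by rw [hxiC]; simp
      have : ((ξ m0 n0 : ℝ) : ℂ) = 0 := by
        rw [← e]
        simpa using h2.symm
      exact hmn (by exact_mod_cast this)
    obtain ⟨v0, hv0⟩ := hAne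
    have hAR : ∀ w ∈ LinearMap.range A, A w ∈ LinearMap.range A :=
      fun w _ => LinearMap.mem_range_self A w
    haveI : Nontrivial (LinearMap.range A) := by
      refine ⟨⟨A v0, LinearMap.mem_range_self A v0⟩, 0, ?_⟩
      rw [Ne, Submodule.mk_eq_zero]
      exact hv0
    obtain ⟨ν, hν⟩ := Module.End.exists_eigenvalue (A.restrict hAR)
    obtain ⟨w0, hw0⟩ := hν.exists_hasEigenvector
    have hAw : A (w0 : Fin k → ℂ) = ν • (w0 : Fin k → ℂ) := by
      have := congrArg Subtype.val hw0.apply_eq_smul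
      simpa [LinearMap.restrict_apply] using this
    have hw0ne : (w0 : Fin k → ℂ) ≠ 0 := by
      intro h
      apply hw0.2
      exact Subtype.ext h
    have hν0 : ν ≠ 0 := by
      intro h0
      rw [h0, zero_smul] at hAw
      obtain ⟨v1, hv1⟩ := w0.2
      have hAA : A (A v1) = 0 := by
        rw [hv1]
        exact hAw
      have h2 : A v1 = 0 := kerlem v1 hAA
      apply hw0ne
      rw [← hv1, h2]
    have hw0mem : (w0 : Fin k → ℂ) ∈ eg ν := by
      rw [mem_eg]
      exact hAw
    haveI : Nontrivial (eg ν) := by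
      refine ⟨⟨(w0 : Fin k → ℂ), hw0mem⟩, 0, ?_⟩
      rw [Ne, Submodule.mk_eq_zero]
      exact hw0ne
    have hνne : (0:ℂ) + ν ≠ 0 := by simpa using hν0
    have hνne' : ν + 0 ≠ 0 := by simpa using hν0
    have hpmem : p ∈ eg 0 := by
      rw [mem_eg]
      rw [← hlam0]
      exact hVP
    have hqmem : q ∈ eg 0 := by
      rw [mem_eg]
      rw [← hlam0]
      exact hVQ
    have hpbarmem : pbar ∈ eg 0 := by
      have := hconjmem 0 p hpmem
      have h1 : (starRingEnd ℂ) (0:ℂ) = (0:ℂ) := by simp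
      rw [h1] at this
      rwa [hpbar_eq] at this
    set Z1 : Module.End ℂ (eg ν) :=
      (Matrix.mulVecLin T1).restrict (fun w hw => hpres1 ν w hw) with hZ1def
    set Z2 : Module.End ℂ (eg ν) :=
      (Matrix.mulVecLin T2).restrict (fun w hw => hpres2 ν w hw) with hZ2def
    have hcommZ : Z1 * Z2 = Z2 * Z1 := by
      apply LinearMap.ext
      intro w
      apply Subtype.ext
      have hzero : ∑ n, pbar n * (w : Fin k → ℂ) n = 0 :=
        isotropy 0 ν hνne pbar (w : Fin k → ℂ) hpbarmem w.2
      have hqz : ∑ n, (w : Fin k → ℂ) n * q n = 0 :=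
        isotropy ν 0 hνne' (w : Fin k → ℂ) q w.2 hqmem
      have hval := hcommval (w : Fin k → ℂ) hzero
      rw [hqz, zero_smul] at hval
      exact sub_eq_zero.mp hval
    obtain ⟨w, x, y, hwne, hX, hY⟩ := exists_common_eigenvector Z1 Z2 hcommZ
    have hXa : T1 *ᵥ (w : Fin k → ℂ) = x • (w : Fin k → ℂ) := by
      have := congrArg Subtype.val hX
      exact this
    have hYa : T2 *ᵥ (w : Fin k → ℂ) = y • (w : Fin k → ℂ) := by
      have := congrArg Subtype.val hY
      exact this
    have h3 : ∑ n, (starRingEnd ℂ) ((w : Fin k → ℂ) n) * p n = 0 := by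
      have hiso : ∑ n, (w : Fin k → ℂ) n * pbar n = 0 :=
        isotropy ν 0 hνne' (w : Fin k → ℂ) pbar w.2 hpbarmem
      calc ∑ n, (starRingEnd ℂ) ((w : Fin k → ℂ) n) * p n
          = ∑ n, (starRingEnd ℂ) ((w : Fin k → ℂ) n * pbar n) := by
            refine Finset.sum_congr rfl (fun n _ => ?_)
            rw [_root_.map_mul, hp_eq_conj_pbar n]
        _ = 0 := by rw [← map_sum, hiso, map_zero]
    have h4 : ∑ n, (w : Fin k → ℂ) n * q n = 0 :=
      isotropy ν 0 hνne' (w : Fin k → ℂ) q w.2 hqmem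
    have := noW (w : Fin k → ℂ) x y hXa hYa h3 h4
    exact hwne (Subtype.ext this)
  exact ⟨hxi0, hθ0⟩

lemma iq_sq : (mkQ 0 1 0 0) * (mkQ 0 1 0 0) = -1 := by
  apply Quaternion.ext <;>
    simp [Quaternion.re_mul, Quaternion.imI_mul, Quaternion.imJ_mul, Quaternion.imK_mul]

end ADHMProof

set_option maxHeartbeats 2000000 in
open ADHMProof in
/-- If the vector field induced by `(ξ, α) ∈ 𝔬(k) ⊕ 𝔰𝔭(1)` vanishes at nondegenerate
ADHM data `(T,P)` satisfying the ADHM condition, then `ξ = 0` and `α = 0`; hence the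
stabiliser of `(T,P)` in `O(k) × Sp(1)` is discrete. -/
theorem infinitesimal_stabiliser_trivial (k : ℕ) (hk : 1 ≤ k)
    (T : Matrix (Fin k) (Fin k) ℍ[ℝ]) (hT : T.IsSymm) (P : Fin k → ℍ[ℝ])
    (hadhm : ADHMCondition k T P) (hnd : ADHMNondegenerate k T P)
    (ξ : Matrix (Fin k) (Fin k) ℝ) (hξ : ξᵀ = -ξ)
    (α : ℍ[ℝ]) (hα : α.re = 0)
    (hcomm : qMat ξ * T - T * qMat ξ = 0)
    (hvec : ∀ i : Fin k, (qMat ξ *ᵥ P) i = P i * α) :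
    ξ = 0 ∧ α = 0 := by
  classical
  set iqQ : ℍ[ℝ] := mkQ 0 1 0 0 with hiq
  have hα0 : α = 0 := by
    by_contra hne
    set nα : ℝ := ‖α‖ with hnα
    have hnα0 : nα ≠ 0 := by
      simp only [hnα, ne_eq, norm_eq_zero]
      exact hne
    have hnαpos : 0 < nα := lt_of_le_of_ne (norm_nonneg α) (Ne.symm hnα0)
    set u : ℍ[ℝ] := (nα⁻¹ : ℝ) • α with hu
    have hure : u.re = 0 := by
      simp [hu, hα]
    have hunorm : ‖u‖ = 1 := by
      rw [hu, norm_smul]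
      simp [hnα, abs_of_pos (inv_pos.mpr hnαpos), inv_mul_cancel₀ hnα0, inv_mul_cancel₀ (norm_ne_zero_iff.mpr hne)]
    have hnsq : Quaternion.normSq u = 1 := by
      rw [Quaternion.normSq_eq_norm_mul_self, hunorm]
      norm_num
    have hcomp : u.imI ^ 2 + u.imJ ^ 2 + u.imK ^ 2 = 1 := by
      have := hnsq
      rw [Quaternion.normSq_def'] at this
      rw [hure] at this
      nlinarith [this]
    have huu : u * u = -1 := by
      apply Quaternion.ext <;>
        simp [Quaternion.re_mul, Quaternion.imI_mul, Quaternion.imJ_mul, Quaternion.imK_mul,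
          hure] <;> nlinarith [hcomp]
    -- find β with β * u = iqQ * β
    have hβ : ∃ β : ℍ[ℝ], β ≠ 0 ∧ β * u = iqQ * β := by
      by_cases hcase : (1 : ℍ[ℝ]) - iqQ * u = 0
      · -- u = -iqQ, take β = j
        have hiu : iqQ * u = 1 := (sub_eq_zero.mp hcase).symm
        have hu' : u = - iqQ := by
          have h2 := congrArg (fun t => iqQ * t) hiu
          rw [← mul_assoc, iq_sq] at h2
          have : -u = iqQ := by
            rw [← neg_one_mul]
            rw [h2]
            simp
          rw [← this]
          simp
        refine ⟨mkQ 0 0 1 0, ?_, ?_⟩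
        · intro h
          have := congrArg QuaternionAlgebra.imJ h
          simp [mkQ] at this
        · rw [hu', hiq]
          apply Quaternion.ext <;>
            simp [Quaternion.re_mul, Quaternion.imI_mul, Quaternion.imJ_mul,
              Quaternion.imK_mul]
      · refine ⟨(1 : ℍ[ℝ]) - iqQ * u, hcase, ?_⟩
        have expand : ((1 : ℍ[ℝ]) - iqQ * u) * u - iqQ * ((1 : ℍ[ℝ]) - iqQ * u)
            = u - iqQ * (u * u) - iqQ + (iqQ * iqQ) * u := by
          noncomm_ring
        rw [huu, iq_sq] at expand
        have : ((1 : ℍ[ℝ]) - iqQ * u) * u - iqQ * ((1 : ℍ[ℝ]) - iqQ * u) = 0 := by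
          rw [expand]
          noncomm_ring
        exact sub_eq_zero.mp this
    obtain ⟨β, hβne, hβu⟩ := hβ
    set βh : ℍ[ℝ] := (‖β‖⁻¹ : ℝ) • β with hβh
    have hβhu : βh * u = iqQ * βh := by
      rw [hβh]
      have l1 : ((‖β‖⁻¹ : ℝ) • β) * u = (‖β‖⁻¹ : ℝ) • (β * u) := by
        rw [Algebra.smul_mul_assoc]
      have l2 : iqQ * ((‖β‖⁻¹ : ℝ) • β) = (‖β‖⁻¹ : ℝ) • (iqQ * β) := by
        rw [Algebra.mul_smul_comm]
      rw [l1, l2, hβu]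
    have hβhnorm : ‖βh‖ = 1 := by
      rw [hβh, norm_smul]
      have : ‖β‖ ≠ 0 := norm_ne_zero_iff.mpr hβne
      simp [abs_of_pos (inv_pos.mpr (lt_of_le_of_ne (norm_nonneg β) (Ne.symm this)))]
      exact inv_mul_cancel₀ this
    have hβhsq : Quaternion.normSq βh = 1 := by
      rw [Quaternion.normSq_eq_norm_mul_self, hβhnorm]
      norm_num
    have hs1 : star βh * βh = 1 := by
      rw [Quaternion.star_mul_self, hβhsq]
      norm_num
    have hs2 : βh * star βh = 1 := by
      have h1 : star (star βh) * star βh = ((Quaternion.normSq (star βh) : ℝ) : ℍ[ℝ]) :=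
        Quaternion.star_mul_self (star βh)
      rw [star_star] at h1
      rw [h1, Quaternion.normSq_star, hβhsq]
      norm_num
    -- relation for α
    have hαu : α = nα • u := by
      rw [hu, smul_smul]
      rw [mul_inv_cancel₀ hnα0]
      simp
    have hβhα : βh * α = (mkQ 0 nα 0 0) * βh := by
      have hmk : (mkQ 0 nα 0 0) = nα • iqQ := by
        apply Quaternion.ext <;> simp [hiq]
      rw [hαu, hmk, Algebra.mul_smul_comm, hβhu, Algebra.smul_mul_assoc]
    have hαβh : α * star βh = star βh * (mkQ 0 nα 0 0) := by
      calc α * star βh = (star βh * βh) * (α * star βh) := by rw [hs1, one_mul]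
        _ = star βh * ((βh * α) * star βh) := by
            simp only [mul_assoc]
        _ = star βh * (((mkQ 0 nα 0 0) * βh) * star βh) := by rw [hβhα]
        _ = star βh * ((mkQ 0 nα 0 0) * (βh * star βh)) := by rw [mul_assoc]
        _ = star βh * (mkQ 0 nα 0 0) := by rw [hs2, mul_one]
    -- transported data
    set P' : Fin k → ℍ[ℝ] := fun n => P n * star βh with hP'
    have hPP' : ∀ i j, P' i * star (P' j) = P i * star (P j) := by
      intro i j
      rw [hP']
      simp only
      rw [StarMul.star_mul]
      rw [star_star]
      calc P i * star βh * (βh * star (P j))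
          = P i * ((star βh * βh) * star (P j)) := by
            rw [mul_assoc, ← mul_assoc (star βh)]
        _ = P i * star (P j) := by rw [hs1, one_mul]
    have hadhm' : ADHMCondition k T P' := by
      intro i j
      have h0 := hadhm i j
      have he : (Tᴴ * T + Matrix.of fun i j => P' i * star (P' j)) i j
          = (Tᴴ * T + Matrix.of fun i j => P i * star (P j)) i j := by
        simp only [Matrix.add_apply, Matrix.of_apply, hPP' i j]
      rw [he]
      exact h0
    have hnd' : ADHMNondegenerate k T P' := by
      intro x y
      obtain ⟨⟨v, s⟩, hv⟩ := hnd x y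
      refine ⟨(v, βh * s), ?_⟩
      rw [← hv]
      funext i
      show ((T - x • 1)ᴴ *ᵥ v) i + P' i * (βh * s)
          = ((T - x • 1)ᴴ *ᵥ v) i + P i * s
      congr 1
      rw [hP']
      simp only
      calc P i * star βh * (βh * s) = P i * ((star βh * βh) * s) := by
            rw [mul_assoc, ← mul_assoc (star βh)]
        _ = P i * s := by rw [hs1, one_mul]
    have hvec' : ∀ i : Fin k, (qMat ξ *ᵥ P') i = P' i * mkQ 0 nα 0 0 := by
      intro i
      have h0 := hvec i
      rw [Matrix.mulVec, dotProduct] at h0 ⊢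
      calc ∑ l, qMat ξ i l * P' l
          = (∑ l, qMat ξ i l * P l) * star βh := by
            rw [Finset.sum_mul]
            refine Finset.sum_congr rfl (fun l _ => ?_)
            rw [hP']
            simp only
            rw [mul_assoc]
        _ = (P i * α) * star βh := by rw [h0]
        _ = P i * (α * star βh) := by rw [mul_assoc]
        _ = P i * (star βh * (mkQ 0 nα 0 0)) := by rw [hαβh]
        _ = P' i * mkQ 0 nα 0 0 := by rw [hP']; simp only; rw [mul_assoc]
    have := ADHMProof.main_aux k hk T hT P' hadhm' hnd' ξ hξ nα hcomm hvec'
    exact hnα0 this.2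
  have hmk0 : (mkQ 0 0 0 0 : ℍ[ℝ]) = 0 := by apply Quaternion.ext <;> simp [mkQ]
  have hvec0 : ∀ i : Fin k, (qMat ξ *ᵥ P) i = P i * mkQ 0 0 0 0 := by
    intro i
    rw [hmk0, mul_zero]
    have := hvec i
    rw [hα0, mul_zero] at this
    exact this
  have := ADHMProof.main_aux k hk T hT P hadhm hnd ξ hξ 0 hcomm hvec0
  exact ⟨this.1, hα0⟩
end
end

section
/- For every ρ > 0 and every T ∈ ℝ⁴, ∫_{ℝ⁴} 6ρ⁴/(π²·(ρ² + ‖x − T‖²)⁴) dx = 1. (This is the normalisation stating that the Chern–Weil representative c of the second Chern class of the charge-1 instanton bundle has total integral 1 over ℝ⁴.) -/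
open MeasureTheory Real

lemma aux_radial (a : ℝ) (ha : 0 < a) :
    ∫ r in Set.Ioi (0 : ℝ), r ^ 3 / (a + r ^ 2) ^ 4 = 1 / (12 * a ^ 2) := by
  set g : ℝ → ℝ := fun r => -1 / (4 * (a + r ^ 2) ^ 2) + a / (6 * (a + r ^ 2) ^ 3) with hg
  have hpos : ∀ r : ℝ, 0 < a + r ^ 2 := fun r => by positivity
  have hderiv : ∀ r : ℝ, HasDerivAt g (r ^ 3 / (a + r ^ 2) ^ 4) r := by
    intro r
    have hu : HasDerivAt (fun r : ℝ => a + r ^ 2) (2 * r) r := by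
      simpa using (hasDerivAt_pow 2 r).const_add a
    have h2 : HasDerivAt (fun r : ℝ => 4 * (a + r ^ 2) ^ 2)
        (4 * (2 * (a + r ^ 2) * (2 * r))) r := by
      exact ((hu.pow 2).const_mul 4).congr_deriv (by ring)
    have h3 : HasDerivAt (fun r : ℝ => 6 * (a + r ^ 2) ^ 3)
        (6 * (3 * (a + r ^ 2) ^ 2 * (2 * r))) r := by
      exact ((hu.pow 3).const_mul 6).congr_deriv (by ring)
    have hne2 : (4 * (a + r ^ 2) ^ 2) ≠ 0 := by positivity
    have hne3 : (6 * (a + r ^ 2) ^ 3) ≠ 0 := by positivity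
    have hA := (h2.inv hne2).const_mul (-1 : ℝ)
    have hB := (h3.inv hne3).const_mul a
    have := hA.add hB
    have heq : (-1 : ℝ) * (-(4 * (2 * (a + r ^ 2) * (2 * r))) / (4 * (a + r ^ 2) ^ 2) ^ 2)
        + a * (-(6 * (3 * (a + r ^ 2) ^ 2 * (2 * r))) / (6 * (a + r ^ 2) ^ 3) ^ 2)
        = r ^ 3 / (a + r ^ 2) ^ 4 := by
      have h := (hpos r).ne'
      field_simp
      ring
    have hfun : (fun r : ℝ => (-1 : ℝ) * (4 * (a + r ^ 2) ^ 2)⁻¹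
        + a * (6 * (a + r ^ 2) ^ 3)⁻¹) = g := by
      funext r
      simp [hg, div_eq_mul_inv]
    rw [← heq, ← hfun]
    exact this
  have hnn : ∀ r ∈ Set.Ioi (0 : ℝ), 0 ≤ r ^ 3 / (a + r ^ 2) ^ 4 := by
    intro r hr
    have : (0:ℝ) < r := hr
    positivity
  have htend : Filter.Tendsto g Filter.atTop (nhds 0) := by
    have h1 : Filter.Tendsto (fun r : ℝ => -1 / (4 * (a + r ^ 2) ^ 2)) Filter.atTop (nhds 0) := by
      apply Filter.Tendsto.div_atTop (tendsto_const_nhds)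
      apply Filter.Tendsto.const_mul_atTop (by norm_num : (0:ℝ) < 4)
      exact (Filter.tendsto_pow_atTop (by norm_num : (2:ℕ) ≠ 0)).comp
        (Filter.tendsto_atTop_add_const_left _ a
          (Filter.tendsto_pow_atTop (by norm_num : (2:ℕ) ≠ 0)))
    have h2 : Filter.Tendsto (fun r : ℝ => a / (6 * (a + r ^ 2) ^ 3)) Filter.atTop (nhds 0) := by
      apply Filter.Tendsto.div_atTop (tendsto_const_nhds)
      apply Filter.Tendsto.const_mul_atTop (by norm_num : (0:ℝ) < 6)
      exact (Filter.tendsto_pow_atTop (by norm_num : (3:ℕ) ≠ 0)).comp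
        (Filter.tendsto_atTop_add_const_left _ a
          (Filter.tendsto_pow_atTop (by norm_num : (2:ℕ) ≠ 0)))
    simpa using h1.add h2
  have := integral_Ioi_of_hasDerivAt_of_nonneg
    (g := g) (g' := fun r => r ^ 3 / (a + r ^ 2) ^ 4) (a := 0)
    (hderiv 0).continuousAt.continuousWithinAt (fun r _ => hderiv r) hnn htend
  rw [this]
  have ha' := ha.ne'
  simp only [hg]
  norm_num
  field_simp
  ring

/-- Normalisation of the charge-1 Chern–Weil representative: for every `ρ > 0` and
centre `T ∈ ℝ⁴`, `∫_{ℝ⁴} 6ρ⁴/(π²(ρ² + ‖x − T‖²)⁴) dx = 1`. -/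
theorem charge_one_chern_normalisation (ρ : ℝ) (hρ : 0 < ρ) (T : EuclideanSpace ℝ (Fin 4)) :
    ∫ x : EuclideanSpace ℝ (Fin 4), 6 * ρ ^ 4 / (π ^ 2 * (ρ ^ 2 + ‖x - T‖ ^ 2) ^ 4) = 1 := by
  have htrans : (∫ x : EuclideanSpace ℝ (Fin 4),
      6 * ρ ^ 4 / (π ^ 2 * (ρ ^ 2 + ‖x - T‖ ^ 2) ^ 4))
      = ∫ x : EuclideanSpace ℝ (Fin 4), 6 * ρ ^ 4 / (π ^ 2 * (ρ ^ 2 + ‖x‖ ^ 2) ^ 4) :=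
    integral_sub_right_eq_self (fun x => 6 * ρ ^ 4 / (π ^ 2 * (ρ ^ 2 + ‖x‖ ^ 2) ^ 4)) T
  rw [htrans]
  have hradial := integral_fun_norm_addHaar (volume : Measure (EuclideanSpace ℝ (Fin 4)))
    (fun y : ℝ => 6 * ρ ^ 4 / (π ^ 2 * (ρ ^ 2 + y ^ 2) ^ 4))
  have hdim : Module.finrank ℝ (EuclideanSpace ℝ (Fin 4)) = 4 := by
    simp [finrank_euclideanSpace]
  rw [hdim] at hradial
  rw [hradial]
  have hball : (volume (Metric.ball (0 : EuclideanSpace ℝ (Fin 4)) 1)).toReal = π ^ 2 / 2 := by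
    rw [EuclideanSpace.volume_ball]
    have hΓ : Real.Gamma ((Fintype.card (Fin 4) : ℝ) / 2 + 1) = 2 := by
      rw [show ((Fintype.card (Fin 4) : ℝ) / 2 + 1) = ((2:ℕ) : ℝ) + 1 by
        simp; norm_num]
      rw [Real.Gamma_nat_eq_factorial]
      norm_num
    rw [hΓ]
    rw [ENNReal.toReal_mul]
    have hs : Real.sqrt π ^ Fintype.card (Fin 4) = π ^ 2 := by
      rw [show Fintype.card (Fin 4) = 4 by simp]
      rw [show (4:ℕ) = 2 * 2 by norm_num, pow_mul, Real.sq_sqrt Real.pi_nonneg]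
    rw [ENNReal.toReal_ofReal (by positivity), hs, ENNReal.toReal_pow,
      ENNReal.toReal_ofReal (by norm_num)]
    norm_num
  rw [measureReal_def, hball]
  have hint : (∫ y in Set.Ioi (0:ℝ), y ^ (4 - 1) • (6 * ρ ^ 4 / (π ^ 2 * (ρ ^ 2 + y ^ 2) ^ 4)))
      = 1 / (2 * π ^ 2) := by
    have : ∀ y : ℝ, y ^ (4 - 1) • (6 * ρ ^ 4 / (π ^ 2 * (ρ ^ 2 + y ^ 2) ^ 4))
        = (6 * ρ ^ 4 / π ^ 2) * (y ^ 3 / (ρ ^ 2 + y ^ 2) ^ 4) := by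
      intro y
      have hy : (0:ℝ) < ρ ^ 2 + y ^ 2 := by positivity
      have hπ : π ≠ 0 := Real.pi_ne_zero
      rw [smul_eq_mul]
      field_simp
    simp only [this]
    rw [integral_const_mul, aux_radial (ρ ^ 2) (by positivity)]
    have hπ : π ≠ 0 := Real.pi_ne_zero
    have hρ' : ρ ≠ 0 := hρ.ne'
    field_simp
    ring
  rw [hint]
  have hπ : π ≠ 0 := Real.pi_ne_zero
  simp only [smul_eq_mul, nsmul_eq_mul]
  field_simp
  ring
end

section
/- Define f : ℝ⁴ × ℝ → ℝ (away from the origin) by f(x,ρ) = (‖x‖² + 3ρ²)/(2π²·(‖x‖² + ρ²)³). Then for every (x,ρ) ≠ (0,0): (i) ∑_{i=1}^{4} ∂/∂x_i ( f(x,ρ)·x_i ) = 6ρ⁴/(π²·(ρ² + ‖x‖²)⁴), and (ii) ∂f/∂ρ (x,ρ) = −6ρ³/(π²·(ρ² + ‖x‖²)⁴). (These two identities express that the Chern–Weil 4-form c of the charge-1 instanton bundle is the exterior derivative of the explicit 3-form f·∑_i (−1)^i x̃_i dx̃₁∧⋯∧î∧⋯∧dx̃₄.) -/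
set_option maxHeartbeats 1000000

open Real

noncomputable section

/-- The potential `f(x,ρ) = (‖x‖² + 3ρ²)/(2π²(‖x‖² + ρ²)³)` whose exterior derivative
against the Gauß 3-form gives the charge-1 Chern–Weil 4-form. -/
def chernPotential (x : EuclideanSpace ℝ (Fin 4)) (ρ : ℝ) : ℝ :=
  (‖x‖ ^ 2 + 3 * ρ ^ 2) / (2 * π ^ 2 * (‖x‖ ^ 2 + ρ ^ 2) ^ 3)

/-- For `(x,ρ) ≠ (0,0)`:
(i) `∑ᵢ ∂/∂xᵢ (f(x,ρ)·xᵢ) = 6ρ⁴/(π²(ρ² + ‖x‖²)⁴)`, and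
(ii) `∂f/∂ρ = −6ρ³/(π²(ρ² + ‖x‖²)⁴)`.
These identities express that the charge-1 Chern–Weil 4-form `c` is the exterior
derivative of the explicit 3-form `f·∑ᵢ(−1)ⁱ x̃ᵢ dx̃₁∧⋯∧î∧⋯∧dx̃₄`. -/
theorem chernPotential_derivatives (x : EuclideanSpace ℝ (Fin 4)) (ρ : ℝ)
    (hxρ : ¬(x = 0 ∧ ρ = 0)) :
    (∑ i : Fin 4,
        fderiv ℝ (fun y : EuclideanSpace ℝ (Fin 4) => chernPotential y ρ * y i) x
          (EuclideanSpace.single i (1 : ℝ))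
      = 6 * ρ ^ 4 / (π ^ 2 * (ρ ^ 2 + ‖x‖ ^ 2) ^ 4)) ∧
    deriv (fun r : ℝ => chernPotential x r) ρ
      = -(6 * ρ ^ 3 / (π ^ 2 * (ρ ^ 2 + ‖x‖ ^ 2) ^ 4)) := by
  have hπ : (π : ℝ) ≠ 0 := Real.pi_ne_zero
  have hD : (0:ℝ) < ‖x‖ ^ 2 + ρ ^ 2 := by
    rcases not_and_or.mp hxρ with hx | hr
    · have : 0 < ‖x‖ := norm_pos_iff.mpr hx
      positivity
    · positivity
  have hDne : (‖x‖ ^ 2 + ρ ^ 2) ≠ 0 := ne_of_gt hD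
  constructor
  · -- part (i)
    set s : ℝ := ‖x‖ ^ 2 with hs
    set φ : ℝ → ℝ := fun t => (t + 3 * ρ ^ 2) / (2 * π ^ 2 * (t + ρ ^ 2) ^ 3) with hφdef
    have hφ : HasDerivAt φ (-(s + 4 * ρ ^ 2) / (π ^ 2 * (s + ρ ^ 2) ^ 4)) s := by
      have h1 : HasDerivAt (fun t : ℝ => t + 3 * ρ ^ 2) 1 s := (hasDerivAt_id s).add_const _
      have h2 : HasDerivAt (fun t : ℝ => t + ρ ^ 2) 1 s := (hasDerivAt_id s).add_const _
      have h3 := (h2.pow 3).const_mul (2 * π ^ 2)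
      have hne : 2 * π ^ 2 * (s + ρ ^ 2) ^ 3 ≠ 0 := by positivity
      have : HasDerivAt φ _ s := h1.div h3 hne
      convert this using 1
      field_simp
      ring
    have hN : HasFDerivAt (fun y : EuclideanSpace ℝ (Fin 4) => ‖y‖ ^ 2)
        (2 • (innerSL ℝ x)) x := by
      simpa using (hasFDerivAt_id x).norm_sq
    have key : ∀ i : Fin 4,
        fderiv ℝ (fun y : EuclideanSpace ℝ (Fin 4) => chernPotential y ρ * y i) x
          (EuclideanSpace.single i (1 : ℝ))
        = φ s + (-(s + 4 * ρ ^ 2) / (π ^ 2 * (s + ρ ^ 2) ^ 4)) * (2 * (x i * x i)) := by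
      intro i
      have hcomp : HasFDerivAt (fun y : EuclideanSpace ℝ (Fin 4) => φ (‖y‖ ^ 2))
          ((-(s + 4 * ρ ^ 2) / (π ^ 2 * (s + ρ ^ 2) ^ 4)) • (2 • (innerSL ℝ x))) x :=
        HasDerivAt.comp_hasFDerivAt (h₂ := φ) x hφ hN
      have hproj : HasFDerivAt (fun y : EuclideanSpace ℝ (Fin 4) => y i)
          ((EuclideanSpace.proj i : EuclideanSpace ℝ (Fin 4) →L[ℝ] ℝ)) x :=
        by exact ContinuousLinearMap.hasFDerivAt (𝕜 := ℝ) (EuclideanSpace.proj i)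
      have hmul := hcomp.mul hproj
      have heq : ((fun y : EuclideanSpace ℝ (Fin 4) => φ (‖y‖ ^ 2)) * fun y => y i)
          = fun y : EuclideanSpace ℝ (Fin 4) => chernPotential y ρ * y i := rfl
      rw [heq] at hmul
      rw [hmul.fderiv]
      simp [EuclideanSpace.inner_single_right, real_inner_comm, chernPotential,
        PiLp.proj_apply, mul_comm]
      ring
    rw [Finset.sum_congr rfl (fun i _ => key i)]
    rw [Finset.sum_add_distrib]
    have hsum : ∑ i : Fin 4, x i * x i = s := by
      rw [hs, ← real_inner_self_eq_norm_sq]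
      simp [PiLp.inner_apply, RCLike.inner_apply]
      rw [EuclideanSpace.real_norm_sq_eq]; simp only [sq]
    rw [← Finset.mul_sum, ← Finset.mul_sum, hsum]
    simp only [Finset.sum_const, Finset.card_univ, Fintype.card_fin, nsmul_eq_mul]
    rw [hφdef]
    have hsρ : s + ρ ^ 2 ≠ 0 := by rw [hs]; linarith [hD]
    have hsρ' : ρ ^ 2 + s ≠ 0 := by rw [add_comm]; exact hsρ
    field_simp
    ring
  · -- part (ii)
    have h1 : HasDerivAt (fun r : ℝ => ‖x‖ ^ 2 + 3 * r ^ 2) (3 * (2 * ρ)) ρ := by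
      simpa using (((hasDerivAt_id ρ).pow 2).const_mul 3).const_add (‖x‖ ^ 2)
    have h2 : HasDerivAt (fun r : ℝ => ‖x‖ ^ 2 + r ^ 2) (2 * ρ) ρ := by
      simpa using ((hasDerivAt_id ρ).pow 2).const_add (‖x‖ ^ 2)
    have h3 := (h2.pow 3).const_mul (2 * π ^ 2)
    have hne : 2 * π ^ 2 * (‖x‖ ^ 2 + ρ ^ 2) ^ 3 ≠ 0 := by positivity
    have h := h1.div h3 hne
    have heq : ((fun r : ℝ => ‖x‖ ^ 2 + 3 * r ^ 2) / fun y => 2 * π ^ 2 * ((fun r : ℝ => ‖x‖ ^ 2 + r ^ 2) ^ 3) y)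
        = fun r : ℝ => chernPotential x r := rfl
    rw [heq] at h
    rw [h.deriv]
    simp only [Pi.pow_apply]
    have hDne' : ρ ^ 2 + ‖x‖ ^ 2 ≠ 0 := by rw [add_comm]; exact hDne
    field_simp
    ring
end
end
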